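/- For any partition λ of n, the Schur polynomial s_λ(X) equals the sum over standard Young tableaux T of shape λ of the fundamental quasisymmetric function F_{Des(T)}(X). -/
import Mathlib


open MvPolynomial Finset Equiv

attribute [local instance] Classical.propDecidable

noncomputable section

/-! ### Type A fundamental quasisymmetric functions -/

/-- A weakly increasing sequence of length `n` in `[M]` with strict increases at
positions in `I` (positions are 1-indexed: `k ∈ I` forces strictness between the
`k`-th and `(k+1)`-st entries, i.e. between 0-indexed entries `k-1` and `k`). -/
def seqOK (n M : ℕ) (I : Finset ℕ) (g : Fin n → Fin M) : Prop :=
  ∀ i j : Fin n, (i : ℕ) + 1 = (j : ℕ) → (g i ≤ g j ∧ ((j : ℕ) ∈ I → g i < g j))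

/-- Gessel's fundamental quasisymmetric function `F_I` on the alphabet `x_1,…,x_M`. -/
def Fqsym (M n : ℕ) (I : Finset ℕ) : MvPolynomial (Fin M) ℤ :=
  ∑ g ∈ Finset.univ.filter (seqOK n M I), ∏ i, X (g i)

/-- Descent set of a permutation written as the word `π(1) … π(n)`:
`k` is a descent iff `π(k) > π(k+1)` (1-indexed values, `k ∈ [1, n-1]`). -/
def desPerm {n : ℕ} (α : Equiv.Perm (Fin n)) : Finset ℕ :=
  (Finset.range n).filter fun k =>
    ∃ i j : Fin n, (i : ℕ) + 1 = (j : ℕ) ∧ (j : ℕ) = k ∧ α j < α i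

/-- `γ` is a shuffle of the word `α` with the word `β` shifted up by `n`. -/
def IsShuffle {n m : ℕ} (α : Equiv.Perm (Fin n)) (β : Equiv.Perm (Fin m))
    (γ : Equiv.Perm (Fin (n + m))) : Prop :=
  ∃ φ : Fin n → Fin (n + m), ∃ ψ : Fin m → Fin (n + m),
    (∀ a b : Fin n, a < b → φ a < φ b) ∧
    (∀ a b : Fin m, a < b → ψ a < ψ b) ∧
    (∀ i, (γ (φ i) : ℕ) = (α i : ℕ)) ∧
    (∀ j, (γ (ψ j) : ℕ) = n + (β j : ℕ)) ∧
    (∀ k, (∃ i, φ i = k) ∨ (∃ j, ψ j = k))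

/-! ### Young tableaux -/

/-- Semistandard Young tableau of shape `μ` with entries in `Fin M`. -/
def IsSSYT {μ : YoungDiagram} {M : ℕ} (f : ↥μ.cells → Fin M) : Prop :=
  (∀ c d : ↥μ.cells, (c : ℕ × ℕ).1 = (d : ℕ × ℕ).1 → (c : ℕ × ℕ).2 ≤ (d : ℕ × ℕ).2 →
      f c ≤ f d) ∧
  (∀ c d : ↥μ.cells, (c : ℕ × ℕ).2 = (d : ℕ × ℕ).2 → (c : ℕ × ℕ).1 < (d : ℕ × ℕ).1 →
      f c < f d)

/-- The Schur polynomial in `M` variables: generating function of SSYT of shape `μ`. -/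
def schurPoly (M : ℕ) (μ : YoungDiagram) : MvPolynomial (Fin M) ℤ :=
  ∑ f ∈ Finset.univ.filter (fun f : ↥μ.cells → Fin M => IsSSYT f), ∏ c, X (f c)

/-- Standard Young tableau of shape `μ` (with `μ.card = n`), labels `Fin n`. -/
def IsSYT {μ : YoungDiagram} {n : ℕ} (f : ↥μ.cells → Fin n) : Prop :=
  Function.Bijective f ∧
  (∀ c d : ↥μ.cells, (c : ℕ × ℕ).1 = (d : ℕ × ℕ).1 → (c : ℕ × ℕ).2 < (d : ℕ × ℕ).2 →
      f c < f d) ∧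
  (∀ c d : ↥μ.cells, (c : ℕ × ℕ).2 = (d : ℕ × ℕ).2 → (c : ℕ × ℕ).1 < (d : ℕ × ℕ).1 →
      f c < f d)

/-- Descent set of a standard Young tableau: `k` is a descent iff the label `k+1`
(1-indexed) lies in a strictly lower row than the label `k`. -/
def desSYT {μ : YoungDiagram} {n : ℕ} (f : ↥μ.cells → Fin n) : Finset ℕ :=
  (Finset.range n).filter fun k =>
    ∃ c d : ↥μ.cells, (f c : ℕ) + 1 = k ∧ (f d : ℕ) = k ∧ (c : ℕ × ℕ).1 < (d : ℕ × ℕ).1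

/-- `g` is the standardization of the semistandard tableau `f` (ties among equal
entries broken from left to right, i.e. by column). -/
def Standardizes {μ : YoungDiagram} {M n : ℕ} (f : ↥μ.cells → Fin M)
    (g : ↥μ.cells → Fin n) : Prop :=
  ∀ c d : ↥μ.cells,
    g c < g d ↔ (f c < f d ∨ (f c = f d ∧ (c : ℕ × ℕ).2 < (d : ℕ × ℕ).2))

/-! ### Weak composition quasisymmetric functions -/

/-- Expansion of a weak composition into "slots": each zero part contributes one
slot of exponent `0`, each positive part `s` contributes `s` slots of exponent `1`. -/
def wcSlots (α : List ℕ) : List ℕ :=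
  α.flatMap fun s => if s = 0 then [0] else List.replicate s 1

def wcDesAux : List ℕ → ℕ → List ℕ
  | [], _ => []
  | s :: rest, c => if s = 0 then wcDesAux rest (c + 1) else (c + s) :: wcDesAux rest (c + s)

/-- The descent set `D(α)` of a weak composition `α`. -/
def wcDes (α : List ℕ) : Finset ℕ := (wcDesAux α 0).toFinset

/-- The weak composition fundamental quasisymmetric function `F̃_α` on `x_1,…,x_M`. -/
def wcF (M : ℕ) (α : List ℕ) : MvPolynomial (Fin M) ℤ :=
  ∑ g ∈ Finset.univ.filter (seqOK (wcSlots α).length M (wcDes α)),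
    ∏ t : Fin (wcSlots α).length, X (g t) ^ (wcSlots α).get t

/-! ### Coloured permutations -/

/-- Order key for a coloured letter: overlined letters `(true, v)` come first
(ordered by value), then non-overlined letters `(false, v)`. -/
def cOrd (L : ℕ) (x : Bool × ℕ) : ℕ := if x.1 then x.2 else 2 * L + x.2

/-- Generating function `Γ(π)` of `P_π`-partitions for a coloured permutation,
given as a word `w` of letters `(overlined?, value)`. -/
def GammaC (M : ℕ) (w : List (Bool × ℕ)) : MvPolynomial (Fin M) ℤ :=
  ∑ f ∈ Finset.univ.filter (fun f : Fin w.length → Fin M =>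
      ∀ i j : Fin w.length, (i : ℕ) + 1 = (j : ℕ) →
        (f i ≤ f j ∧ (cOrd w.length (w.get j) < cOrd w.length (w.get i) → f i < f j))),
    ∏ i, X (f i) ^ (if (w.get i).1 then 0 else 1)

/-- The weak composition `comp(π)` of a coloured permutation word: overlined letters
give zero parts, maximal increasing runs of non-overlined letters give positive parts. -/
def compC : List (Bool × ℕ) → List ℕ
  | [] => []
  | (true, _) :: rest => 0 :: compC rest
  | (false, v) :: rest =>
    match rest with
    | (false, w) :: _ =>
      if v < w then
        match compC rest with
        | [] => [1]
        | s :: t => (s + 1) :: t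
      else 1 :: compC rest
    | _ => 1 :: compC rest

/-! ### Standard and semistandard (p)-tableaux -/

/-- Standard `(p)`-tableau of shape `((p), μ)` with `μ.card = n`: a strictly
increasing row `a` of length `p` and a standard filling `f` of `μ`, jointly
bijective onto `[n+p]`. -/
def IsSBT {μ : YoungDiagram} {p n : ℕ} (a : Fin p → Fin (n + p))
    (f : ↥μ.cells → Fin (n + p)) : Prop :=
  (∀ i j : Fin p, i < j → a i < a j) ∧
  Function.Injective f ∧
  (∀ (i : Fin p) (c : ↥μ.cells), a i ≠ f c) ∧
  (∀ c d : ↥μ.cells, (c : ℕ × ℕ).1 = (d : ℕ × ℕ).1 → (c : ℕ × ℕ).2 < (d : ℕ × ℕ).2 →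
      f c < f d) ∧
  (∀ c d : ↥μ.cells, (c : ℕ × ℕ).2 = (d : ℕ × ℕ).2 → (c : ℕ × ℕ).1 < (d : ℕ × ℕ).1 →
      f c < f d)

/-- Row of the cell of `T⁺` labelled `t` (junk value `0` if `t` labels `T⁻`). -/
def rowOfLabel {μ : YoungDiagram} {N : ℕ} (f : ↥μ.cells → Fin N) (t : ℕ) : ℕ :=
  ∑ c ∈ Finset.univ.filter (fun c : ↥μ.cells => (f c : ℕ) = t), (c : ℕ × ℕ).1

/-- Slot list of a standard `(p)`-tableau: for each label `t = 0,…,n+p-1`, `none`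
if `t` lies in `T⁻`, and `some r` if `t` lies in row `r` of `T⁺`. -/
def slotsSBT {μ : YoungDiagram} {p n : ℕ} (a : Fin p → Fin (n + p))
    (f : ↥μ.cells → Fin (n + p)) : List (Option ℕ) :=
  (List.range (n + p)).map fun t =>
    if ∃ i : Fin p, (a i : ℕ) = t then none else some (rowOfLabel f t)

/-- Parse a slot list into a weak composition: `none` slots give zero parts,
maximal runs of `some` slots with no descent (no row increase) give positive parts. -/
def compOfSlots : List (Option ℕ) → List ℕ
  | [] => []
  | none :: rest => 0 :: compOfSlots rest
  | some r :: rest =>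
    match rest with
    | some r' :: _ =>
      if r < r' then 1 :: compOfSlots rest
      else
        match compOfSlots rest with
        | [] => [1]
        | s :: t => (s + 1) :: t
    | _ => 1 :: compOfSlots rest

/-- The weak composition `comp(T)` of a standard `(p)`-tableau `T = (a, f)`. -/
def compSBT {μ : YoungDiagram} {p n : ℕ} (a : Fin p → Fin (n + p))
    (f : ↥μ.cells → Fin (n + p)) : List ℕ :=
  compOfSlots (slotsSBT a f)

/-- `(a, b)` (standard) is the standardization of the semistandard `(p)`-tableau
`(g, f)`: order is preserved, ties broken by relabelling `T⁻` first, and within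
each tableau from left to right. -/
def StdSBT {μ : YoungDiagram} {M p n : ℕ} (g : Fin p → Fin M) (f : ↥μ.cells → Fin M)
    (a : Fin p → Fin (n + p)) (b : ↥μ.cells → Fin (n + p)) : Prop :=
  (∀ i j : Fin p, a i < a j ↔ (g i < g j ∨ (g i = g j ∧ i < j))) ∧
  (∀ c d : ↥μ.cells, b c < b d ↔ (f c < f d ∨ (f c = f d ∧ (c : ℕ × ℕ).2 < (d : ℕ × ℕ).2))) ∧
  (∀ (i : Fin p) (c : ↥μ.cells), a i < b c ↔ g i ≤ f c) ∧
  (∀ (c : ↥μ.cells) (i : Fin p), b c < a i ↔ f c < g i)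

/-! ### Chow's type B quasisymmetric functions and signed permutations -/

/-- Type B admissible sequence: `0 = i_0 ≤ i_1 ≤ … ≤ i_n` with `i_j < i_{j+1}`
for `j ∈ I` (the alphabet is `x_0, x_1, …, x_M`, i.e. `Fin (M+1)`). -/
def seqOKB (n : ℕ) {M : ℕ} (I : Finset ℕ) (g : Fin n → Fin (M + 1)) : Prop :=
  (∀ i j : Fin n, (i : ℕ) + 1 = (j : ℕ) → (g i ≤ g j ∧ ((j : ℕ) ∈ I → g i < g j))) ∧
  (∀ j : Fin n, (j : ℕ) = 0 → (0 : ℕ) ∈ I → (0 : Fin (M + 1)) < g j)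

/-- Chow's type B fundamental quasisymmetric function `F^B_I`, with variables
embedded into an ambient variable set via `v`. -/
def FB (R : Type*) [CommRing R] {σ : Type*} (M n : ℕ) (I : Finset ℕ)
    (v : Fin (M + 1) → σ) : MvPolynomial σ R :=
  ∑ g ∈ Finset.univ.filter (seqOKB n I), ∏ i, X (v (g i))

/-- A signed permutation of `[n]`: an (unsigned) permutation together with signs. -/
abbrev SPerm (n : ℕ) := Equiv.Perm (Fin n) × (Fin n → Bool)

/-- The value `π(i) ∈ ±[n]` of a signed permutation at position `i`. -/
def sval {n : ℕ} (π : SPerm n) (i : Fin n) : ℤ :=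
  if π.2 i then -((π.1 i : ℤ) + 1) else (π.1 i : ℤ) + 1

/-- Type B descent set: `0` is a descent iff `π(1) < 0`; `k ≥ 1` is a descent iff
`π(k) > π(k+1)`. -/
def desB {n : ℕ} (π : SPerm n) : Finset ℕ :=
  (Finset.range n).filter fun k =>
    (k = 0 ∧ ∃ j : Fin n, (j : ℕ) = 0 ∧ sval π j < 0) ∨
    (∃ i j : Fin n, (i : ℕ) + 1 = (j : ℕ) ∧ (j : ℕ) = k ∧ sval π j < sval π i)

/-- Total colour: the number of negative values. -/
def tcB {n : ℕ} (π : SPerm n) : ℕ := (Finset.univ.filter fun i => π.2 i).card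

/-- The inverse of a signed permutation. -/
def invB {n : ℕ} (π : SPerm n) : SPerm n := (π.1⁻¹, fun j => π.2 (π.1⁻¹ j))

/-- Signed shuffle: `γ` is obtained by interleaving `α` with `β` whose letters'
absolute values are shifted by `n` (signs preserved). -/
def IsShuffleB {n m : ℕ} (α : SPerm n) (β : SPerm m) (γ : SPerm (n + m)) : Prop :=
  ∃ φ : Fin n → Fin (n + m), ∃ ψ : Fin m → Fin (n + m),
    (∀ a b : Fin n, a < b → φ a < φ b) ∧
    (∀ a b : Fin m, a < b → ψ a < ψ b) ∧
    (∀ i, sval γ (φ i) = sval α i) ∧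
    (∀ j, sval γ (ψ j) = sval β j + (if 0 < sval β j then (n : ℤ) else -(n : ℤ))) ∧
    (∀ k, (∃ i, φ i = k) ∨ (∃ j, ψ j = k))

/-! ### Domino tableaux -/

/-- Two cells are adjacent (horizontally or vertically). -/
def AdjCell (c d : ℕ × ℕ) : Prop :=
  (c.1 = d.1 ∧ (c.2 + 1 = d.2 ∨ d.2 + 1 = c.2)) ∨
  (c.2 = d.2 ∧ (c.1 + 1 = d.1 ∨ d.1 + 1 = c.1))

/-- A perfect matching of the cells of `μ` into dominoes. -/
def IsPairing {μ : YoungDiagram} (m : ↥μ.cells → ↥μ.cells) : Prop :=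
  ∀ c, m c ≠ c ∧ m (m c) = c ∧ AdjCell (c : ℕ × ℕ) (m c : ℕ × ℕ)

/-- Standard domino tableau of shape `μ` (with `μ.card = 2n`): a domino tiling
together with a bijective labelling of the dominoes by `[n]`, weakly increasing
along rows and columns. -/
def IsSDT {μ : YoungDiagram} {n : ℕ}
    (T : (↥μ.cells → Fin n) × (↥μ.cells → ↥μ.cells)) : Prop :=
  IsPairing T.2 ∧ (∀ c, T.1 (T.2 c) = T.1 c) ∧
  (∀ c d, T.1 c = T.1 d → d = c ∨ d = T.2 c) ∧
  (∀ c d : ↥μ.cells, (c : ℕ × ℕ).1 = (d : ℕ × ℕ).1 → (c : ℕ × ℕ).2 ≤ (d : ℕ × ℕ).2 →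
      T.1 c ≤ T.1 d) ∧
  (∀ c d : ↥μ.cells, (c : ℕ × ℕ).2 = (d : ℕ × ℕ).2 → (c : ℕ × ℕ).1 ≤ (d : ℕ × ℕ).1 →
      T.1 c ≤ T.1 d)

/-- Descent set of a standard domino tableau: `0` is a descent iff the domino
labelled `1` is vertical; `k ≥ 1` is a descent iff the domino labelled `k+1` lies
strictly below the domino labelled `k`. -/
def desSDT {μ : YoungDiagram} {n : ℕ}
    (T : (↥μ.cells → Fin n) × (↥μ.cells → ↥μ.cells)) : Finset ℕ :=
  (Finset.range n).filter fun k =>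
    (k = 0 ∧ ∃ c : ↥μ.cells, (T.1 c : ℕ) = 0 ∧ ((T.2 c : ℕ × ℕ).2 = (c : ℕ × ℕ).2)) ∨
    (∃ i j : Fin n, (i : ℕ) + 1 = (j : ℕ) ∧ (j : ℕ) = k ∧
      ∀ c d : ↥μ.cells, T.1 c = i → T.1 d = j → (c : ℕ × ℕ).1 < (d : ℕ × ℕ).1)

/-- Number of vertical dominoes of a tiling. -/
def nvert {μ : YoungDiagram} (m : ↥μ.cells → ↥μ.cells) : ℕ :=
  (Finset.univ.filter fun c : ↥μ.cells => (m c : ℕ × ℕ).2 = (c : ℕ × ℕ).2).card / 2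

/-- Semistandard domino tableau with labels in `{0, 1, …, M}`: weakly increasing
along rows, strictly increasing down columns except inside a vertical domino, and
a vertical top-leftmost domino cannot be labelled `0`. -/
def IsSSDT {μ : YoungDiagram} {M : ℕ}
    (T : (↥μ.cells → Fin (M + 1)) × (↥μ.cells → ↥μ.cells)) : Prop :=
  IsPairing T.2 ∧ (∀ c, T.1 (T.2 c) = T.1 c) ∧
  (∀ c d : ↥μ.cells, (c : ℕ × ℕ).1 = (d : ℕ × ℕ).1 → (c : ℕ × ℕ).2 ≤ (d : ℕ × ℕ).2 →
      T.1 c ≤ T.1 d) ∧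
  (∀ c d : ↥μ.cells, (c : ℕ × ℕ).2 = (d : ℕ × ℕ).2 → (c : ℕ × ℕ).1 < (d : ℕ × ℕ).1 →
      (T.1 c < T.1 d ∨ d = T.2 c)) ∧
  (∀ c : ↥μ.cells, (c : ℕ × ℕ) = (0, 0) → (T.2 c : ℕ × ℕ).2 = (c : ℕ × ℕ).2 → T.1 c ≠ 0)

/-- The monomial `X^T` of a semistandard domino tableau: one variable per domino
(choosing the cell of smaller coordinate sum as representative). -/
def dominoMonomial {μ : YoungDiagram} {M : ℕ}
    (T : (↥μ.cells → Fin (M + 1)) × (↥μ.cells → ↥μ.cells)) :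
    MvPolynomial (Fin (M + 1)) ℤ :=
  ∏ c ∈ Finset.univ.filter (fun c : ↥μ.cells =>
      (c : ℕ × ℕ).1 + (c : ℕ × ℕ).2 < (T.2 c : ℕ × ℕ).1 + (T.2 c : ℕ × ℕ).2),
    X (T.1 c)

/-- `q^{sp}` where `sp = v/2` is half the number of vertical dominoes, as an
element of the group algebra `ℤ[q^{ℚ}]`. -/
def qspin (v : ℕ) : AddMonoidAlgebra ℤ ℚ := AddMonoidAlgebra.single ((v : ℚ) / 2) 1

/-- The domino function `G_λ(X; q)`, with `q^{1/2}`-powers recorded in `ℤ[q^ℚ]`. -/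
def Gdom (M : ℕ) (μ : YoungDiagram) :
    MvPolynomial (Fin (M + 1)) (AddMonoidAlgebra ℤ ℚ) :=
  ∑ T ∈ Finset.univ.filter
      (fun T : (↥μ.cells → Fin (M + 1)) × (↥μ.cells → ↥μ.cells) => IsSSDT T),
    C (qspin (nvert T.2)) *
      ∏ c ∈ Finset.univ.filter (fun c : ↥μ.cells =>
          (c : ℕ × ℕ).1 + (c : ℕ × ℕ).2 < (T.2 c : ℕ × ℕ).1 + (T.2 c : ℕ × ℕ).2),
        X (T.1 c)

/-- The domino function `G_λ(X; 1)` at `q = 1`. -/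
def Gdom1 (M : ℕ) (μ : YoungDiagram) : MvPolynomial (Fin (M + 1)) ℤ :=
  ∑ T ∈ Finset.univ.filter
      (fun T : (↥μ.cells → Fin (M + 1)) × (↥μ.cells → ↥μ.cells) => IsSSDT T),
    dominoMonomial T

/-! ### 2-quotient -/

/-- The Young diagram with row lengths `ρ` (cut off at bounds `R, C`); the
definition forces lower-set-ness. -/
def diagramOf (ρ : ℕ → ℕ) (R C : ℕ) : YoungDiagram where
  cells := ((Finset.range R) ×ˢ (Finset.range C)).filter fun c => ∀ i ≤ c.1, c.2 < ρ i
  isLowerSet := by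
    intro a b hba ha
    simp only [Finset.coe_filter, Set.mem_setOf_eq, Finset.mem_product,
      Finset.mem_range] at *
    exact ⟨⟨lt_of_le_of_lt hba.1 ha.1.1, lt_of_le_of_lt hba.2 ha.1.2⟩,
      fun i hi => lt_of_le_of_lt hba.2 (ha.2 i (le_trans hi hba.1))⟩

/-- The pair of row-length functions of the 2-quotient of `μ` (a partition of `2n`),
computed via beta-numbers with `r = 2n + 2` beads: even beta-numbers give the first
component `λ⁻`, odd beta-numbers the second component `λ⁺`. -/
def quotientRows (μ : YoungDiagram) (n : ℕ) : (ℕ → ℕ) × (ℕ → ℕ) :=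
  let r := 2 * n + 2
  let bs := (List.range r).map fun i => μ.rowLen i + (r - 1 - i)
  let od := (bs.filter fun x => x % 2 = 1).insertionSort (· ≥ ·)
  let ev := (bs.filter fun x => x % 2 = 0).insertionSort (· ≥ ·)
  (fun j => ev.getD j 0 / 2 - (ev.length - 1 - j),
   fun j => (od.getD j 0 - 1) / 2 - (od.length - 1 - j))

/-- First component `λ⁻` of the 2-quotient of `μ ∈ P⁰(n)`. -/
def twoQuotMinus (μ : YoungDiagram) (n : ℕ) : YoungDiagram :=
  diagramOf (quotientRows μ n).1 (2 * n + 2) (4 * n + 4)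

/-- Second component `λ⁺` of the 2-quotient of `μ ∈ P⁰(n)`. -/
def twoQuotPlus (μ : YoungDiagram) (n : ℕ) : YoungDiagram :=
  diagramOf (quotientRows μ n).2 (2 * n + 2) (4 * n + 4)

/-- The Schur polynomial on the alphabet `X^* = {x_1, …, x_M}` (no `x_0`),
inside the ring of polynomials on `{x_0, …, x_M}`. -/
def schurStarPoly (M : ℕ) (μ : YoungDiagram) : MvPolynomial (Fin (M + 1)) ℤ :=
  ∑ f ∈ Finset.univ.filter
      (fun f : ↥μ.cells → Fin (M + 1) => IsSSYT f ∧ ∀ c, f c ≠ 0),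
    ∏ c, X (f c)

end

section SchurAux

attribute [local instance] Classical.propDecidable

/-- Lexicographic comparison via base-`K` encoding. -/
lemma lex_key {a a' b b' K : ℕ} (hb : b < K) (hb' : b' < K) :
    a * K + b < a' * K + b' ↔ a < a' ∨ (a = a' ∧ b < b') := by
  have H : ∀ u u' v v' : ℕ, v < K → u < u' → u * K + v < u' * K + v' := by
    intro u u' v v' hv huu
    have h1 : u * K + K ≤ u' * K := by
      calc u * K + K = (u + 1) * K := by ring
        _ ≤ u' * K := Nat.mul_le_mul_right K huu
    omega
  constructor
  · intro hlt
    rcases lt_trichotomy a a' with hlt' | heq | hgt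
    · exact Or.inl hlt'
    · subst heq; exact Or.inr ⟨rfl, by omega⟩
    · exact absurd (H a' a b' b hb' hgt) (by omega)
  · rintro (hlt | ⟨rfl, hlt⟩)
    · exact H a a' b b' hb hlt
    · omega

/-- Columns of cells are bounded by the number of cells. -/
lemma col_lt_card {lam : YoungDiagram} (c : ↥lam.cells) : (c : ℕ × ℕ).2 < lam.card := by
  have hm : ((c : ℕ × ℕ).1, (c : ℕ × ℕ).2) ∈ lam := by
    have := c.prop
    rw [YoungDiagram.mem_cells] at this
    simpa using this
  have h1 : (c : ℕ × ℕ).2 < lam.rowLen (c : ℕ × ℕ).1 := YoungDiagram.mem_iff_lt_rowLen.mp hm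
  have h2 : lam.rowLen (c : ℕ × ℕ).1 ≤ lam.card := by
    rw [YoungDiagram.rowLen_eq_card]
    exact Finset.card_le_card (Finset.filter_subset _ _)
  omega

/-- The standardization key of a filling. -/
def sKey (n : ℕ) {M : ℕ} {lam : YoungDiagram} (F : ↥lam.cells → Fin M)
    (c : ↥lam.cells) : ℕ :=
  (F c : ℕ) * (n + 1) + (c : ℕ × ℕ).2

lemma sKey_lt_iff {n M : ℕ} {lam : YoungDiagram} (h : lam.card = n)
    (F : ↥lam.cells → Fin M) (c d : ↥lam.cells) :
    sKey n F c < sKey n F d ↔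
      (F c < F d ∨ (F c = F d ∧ (c : ℕ × ℕ).2 < (d : ℕ × ℕ).2)) := by
  have hb : (c : ℕ × ℕ).2 < n + 1 := by have := col_lt_card c; omega
  have hb' : (d : ℕ × ℕ).2 < n + 1 := by have := col_lt_card d; omega
  rw [sKey, sKey, lex_key hb hb', Fin.lt_iff_val_lt_val, Fin.val_eq_val]

end SchurAux
section SchurAux2

attribute [local instance] Classical.propDecidable

variable {n M : ℕ} {lam : YoungDiagram}

lemma cell_ext {c d : ↥lam.cells} (h1 : (c : ℕ × ℕ).1 = (d : ℕ × ℕ).1)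
    (h2 : (c : ℕ × ℕ).2 = (d : ℕ × ℕ).2) : c = d :=
  Subtype.ext (Prod.ext h1 h2)

/-- In an SSYT, equal entries with increasing row have decreasing column. -/
lemma ssyt_same_val {F : ↥lam.cells → Fin M} (hF : IsSSYT F) {c d : ↥lam.cells}
    (hv : F c = F d) (hr : (c : ℕ × ℕ).1 < (d : ℕ × ℕ).1) :
    (d : ℕ × ℕ).2 < (c : ℕ × ℕ).2 := by
  by_contra hcon
  push_neg at hcon
  have hmem : ((c : ℕ × ℕ).1, (d : ℕ × ℕ).2) ∈ lam.cells := by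
    rw [YoungDiagram.mem_cells]
    refine lam.up_left_mem hr.le le_rfl ?_
    have := d.prop
    rw [YoungDiagram.mem_cells] at this
    simpa using this
  set e : ↥lam.cells := ⟨((c : ℕ × ℕ).1, (d : ℕ × ℕ).2), hmem⟩ with he
  have h1 : F c ≤ F e := hF.1 c e rfl hcon
  have h2 : F e < F d := hF.2 e d rfl hr
  exact absurd hv (ne_of_lt (lt_of_le_of_lt h1 h2))

lemma ssyt_key_inj (h : lam.card = n) {F : ↥lam.cells → Fin M} (hF : IsSSYT F) :
    Function.Injective (sKey n F) := by
  intro c d he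
  have hb : (c : ℕ × ℕ).2 < n + 1 := by have := col_lt_card c; omega
  have hb' : (d : ℕ × ℕ).2 < n + 1 := by have := col_lt_card d; omega
  have h1 : ¬ ((F c : ℕ) < (F d : ℕ) ∨ ((F c : ℕ) = (F d : ℕ) ∧ (c : ℕ × ℕ).2 < (d : ℕ × ℕ).2)) := by
    rw [← lex_key hb hb']
    simp only [sKey] at he
    omega
  have h2 : ¬ ((F d : ℕ) < (F c : ℕ) ∨ ((F d : ℕ) = (F c : ℕ) ∧ (d : ℕ × ℕ).2 < (c : ℕ × ℕ).2)) := by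
    rw [← lex_key hb' hb]
    simp only [sKey] at he
    omega
  have hv : F c = F d := Fin.ext (by omega)
  have hcol : (c : ℕ × ℕ).2 = (d : ℕ × ℕ).2 := by omega
  rcases lt_trichotomy (c : ℕ × ℕ).1 (d : ℕ × ℕ).1 with hr | hr | hr
  · exact absurd (ssyt_same_val hF hv hr) (by omega)
  · exact cell_ext hr hcol
  · exact absurd (ssyt_same_val hF hv.symm hr) (by omega)

/-- Rank with respect to an injective key gives a strictly compatible bijection. -/
lemma rank_bij {α : Type*} [Fintype α] {n : ℕ} (hc : Fintype.card α = n)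
    (k : α → ℕ) (hk : Function.Injective k) :
    ∃ f : α → Fin n, Function.Bijective f ∧ ∀ c d, f c < f d ↔ k c < k d := by
  classical
  have hlt : ∀ c : α, (Finset.univ.filter fun d => k d < k c).card < n := by
    intro c
    rw [← hc, ← Finset.card_univ]
    apply Finset.card_lt_card
    refine ⟨Finset.filter_subset _ _, fun hsub => ?_⟩
    have := hsub (Finset.mem_univ c)
    simp at this
  set f : α → Fin n := fun c => ⟨_, hlt c⟩ with hfdef
  have mono : ∀ c d, k c < k d → f c < f d := by
    intro c d hcd
    have : (Finset.univ.filter fun e => k e < k c).card <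
        (Finset.univ.filter fun e => k e < k d).card := by
      apply Finset.card_lt_card
      constructor
      · intro e he
        simp only [Finset.mem_filter, Finset.mem_univ, true_and] at he ⊢
        omega
      · intro hsub
        have := hsub (by simp [hcd] : c ∈ Finset.univ.filter fun e => k e < k d)
        simp at this
    exact this
  have hiff : ∀ c d, f c < f d ↔ k c < k d := by
    intro c d
    refine ⟨fun hf => ?_, mono c d⟩
    rcases lt_trichotomy (k c) (k d) with h1 | h1 | h1
    · exact h1
    · exact absurd (congrArg f (hk h1)) (by intro he; rw [he] at hf; exact lt_irrefl _ hf)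
    · exact absurd (lt_trans hf (mono d c h1)) (lt_irrefl _)
  have finj : Function.Injective f := by
    intro c d he
    apply hk
    rcases lt_trichotomy (k c) (k d) with h1 | h1 | h1
    · exact absurd ((hiff c d).mpr h1) (by rw [he]; exact lt_irrefl _)
    · exact h1
    · exact absurd ((hiff d c).mpr h1) (by rw [he]; exact lt_irrefl _)
  exact ⟨f, (Fintype.bijective_iff_injective_and_card f).mpr ⟨finj, by simp [hc]⟩, hiff⟩

lemma seqOK_mono {I : Finset ℕ} {g : Fin n → Fin M} (hg : seqOK n M I g) :
    ∀ i j : Fin n, i ≤ j → g i ≤ g j := by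
  have key : ∀ t : ℕ, ∀ i j : Fin n, (i : ℕ) + t = (j : ℕ) → g i ≤ g j := by
    intro t
    induction t with
    | zero =>
      intro i j hij
      have : i = j := Fin.ext (by omega)
      rw [this]
    | succ t ih =>
      intro i j hij
      have hm : (i : ℕ) + t < n := by have := j.isLt; omega
      exact le_trans (ih i ⟨(i : ℕ) + t, hm⟩ rfl) ((hg ⟨(i : ℕ) + t, hm⟩ j (by simp; omega)).1)
  intro i j hij
  exact key ((j : ℕ) - (i : ℕ)) i j (by have := Fin.le_iff_val_le_val.mp hij; omega)

lemma seqOK_strict {I : Finset ℕ} {g : Fin n → Fin M} (hg : seqOK n M I g)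
    (i j : Fin n) (m : ℕ) (h1 : (i : ℕ) < m) (h2 : m ≤ (j : ℕ)) (hm : m ∈ I) :
    g i < g j := by
  have hmn : m < n := lt_of_le_of_lt h2 j.isLt
  have hab := hg ⟨m - 1, by omega⟩ ⟨m, hmn⟩ (by simp; omega)
  calc g i ≤ g ⟨m - 1, by omega⟩ := seqOK_mono hg _ _ (by rw [Fin.le_iff_val_le_val]; simp; omega)
    _ < g ⟨m, hmn⟩ := hab.2 (by simpa using hm)
    _ ≤ g j := seqOK_mono hg _ _ (by rw [Fin.le_iff_val_le_val]; simpa using h2)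

lemma not_des {f : ↥lam.cells → Fin n} (hinj : Function.Injective f)
    {c d : ↥lam.cells} (hfd : (f c : ℕ) + 1 = (f d : ℕ))
    (hnd : ((f d : ℕ)) ∉ desSYT f) : (d : ℕ × ℕ).1 ≤ (c : ℕ × ℕ).1 := by
  by_contra hcon
  push_neg at hcon
  exact hnd (by
    simp only [desSYT, Finset.mem_filter, Finset.mem_range]
    exact ⟨(f d).isLt, c, d, hfd, rfl, hcon⟩)

lemma rows_le {f : ↥lam.cells → Fin n} (hf : IsSYT f) :
    ∀ t : ℕ, ∀ c d : ↥lam.cells, (f c : ℕ) + t = (f d : ℕ) →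
      (∀ m : ℕ, (f c : ℕ) < m → m ≤ (f d : ℕ) → m ∉ desSYT f) →
      (d : ℕ × ℕ).1 ≤ (c : ℕ × ℕ).1 := by
  intro t
  induction t with
  | zero =>
    intro c d h1 _
    have : c = d := hf.1.1 (Fin.ext (by omega))
    rw [this]
  | succ t ih =>
    intro c d h1 hnd
    obtain ⟨c', hc'⟩ := hf.1.2 ⟨(f c : ℕ) + t, by have := (f d).isLt; omega⟩
    have hc'v : (f c' : ℕ) = (f c : ℕ) + t := by rw [hc']
    have h2 : (d : ℕ × ℕ).1 ≤ (c' : ℕ × ℕ).1 :=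
      not_des hf.1.1 (by omega) (hnd _ (by omega) (by omega))
    have h3 : (c' : ℕ × ℕ).1 ≤ (c : ℕ × ℕ).1 :=
      ih c c' (by omega) (fun m hm1 hm2 => hnd m hm1 (by omega))
    omega

end SchurAux2
section SchurAux3

attribute [local instance] Classical.propDecidable

variable {n M : ℕ} {lam : YoungDiagram}

/-- The composition of a seqOK sequence with a SYT is an SSYT. -/
lemma comp_ssyt {f : ↥lam.cells → Fin n} {g : Fin n → Fin M}
    (hf : IsSYT f) (hg : seqOK n M (desSYT f) g) : IsSSYT (g ∘ f) := by
  constructor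
  · intro c d h1 h2
    rcases eq_or_lt_of_le h2 with he | hlt
    · rw [cell_ext h1 he]
    · exact seqOK_mono hg _ _ (le_of_lt (hf.2.1 c d h1 hlt))
  · intro c d h1 h2
    have hfd : f c < f d := hf.2.2 c d h1 h2
    by_cases hdes : ∃ m : ℕ, (f c : ℕ) < m ∧ m ≤ (f d : ℕ) ∧ m ∈ desSYT f
    · obtain ⟨m, hm1, hm2, hm3⟩ := hdes
      exact seqOK_strict hg _ _ m hm1 hm2 hm3
    · push_neg at hdes
      exfalso
      have hle : (f c : ℕ) ≤ (f d : ℕ) := le_of_lt hfd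
      have := rows_le hf ((f d : ℕ) - (f c : ℕ)) c d (by omega) (fun m a b => hdes m a b)
      omega

/-- Order characterization: the SYT underlying a seqOK pair is the standardization. -/
lemma std_order (h : lam.card = n) {f : ↥lam.cells → Fin n} {g : Fin n → Fin M}
    (hf : IsSYT f) (hg : seqOK n M (desSYT f) g) {c d : ↥lam.cells}
    (hcd : f c < f d) :
    g (f c) < g (f d) ∨ (g (f c) = g (f d) ∧ (c : ℕ × ℕ).2 < (d : ℕ × ℕ).2) := by
  have hle : g (f c) ≤ g (f d) := seqOK_mono hg _ _ hcd.le
  rcases eq_or_lt_of_le hle with he | hlt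
  · right
    refine ⟨he, ?_⟩
    have hnd : ∀ m : ℕ, (f c : ℕ) < m → m ≤ (f d : ℕ) → m ∉ desSYT f := by
      intro m hm1 hm2 hm3
      exact absurd he (ne_of_lt (seqOK_strict hg (f c) (f d) m hm1 hm2 hm3))
    have hrow : (d : ℕ × ℕ).1 ≤ (c : ℕ × ℕ).1 := by
      have hle' : (f c : ℕ) ≤ (f d : ℕ) := le_of_lt hcd
      exact rows_le hf ((f d : ℕ) - (f c : ℕ)) c d (by omega) hnd
    rcases eq_or_lt_of_le hrow with hre | hrl
    · rcases lt_trichotomy (c : ℕ × ℕ).2 (d : ℕ × ℕ).2 with h2 | h2 | h2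
      · exact h2
      · exact absurd (cell_ext hre.symm h2) (by intro hh; rw [hh] at hcd; exact lt_irrefl _ hcd)
      · exact absurd (hf.2.1 d c hre h2) (fun hh => lt_asymm hcd hh)
    · exact ssyt_same_val (comp_ssyt hf hg) (c := d) (d := c) he.symm hrl
  · left
    exact hlt

/-- The SYT order is determined by the key of the composed filling. -/
lemma std_order_key (h : lam.card = n) {f : ↥lam.cells → Fin n} {g : Fin n → Fin M}
    (hf : IsSYT f) (hg : seqOK n M (desSYT f) g) (c d : ↥lam.cells) :
    f c < f d ↔ sKey n (g ∘ f) c < sKey n (g ∘ f) d := by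
  constructor
  · intro hcd
    rw [sKey_lt_iff h]
    exact std_order h hf hg hcd
  · intro hk
    rcases lt_trichotomy (f c) (f d) with h1 | h1 | h1
    · exact h1
    · have : c = d := hf.1.1 h1
      subst this
      exact absurd hk (lt_irrefl _)
    · have := (sKey_lt_iff h (g ∘ f) d c).mpr (std_order h hf hg h1)
      exact absurd (lt_trans hk this) (lt_irrefl _)

end SchurAux3
section SchurAux4

attribute [local instance] Classical.propDecidable

variable {n M : ℕ} {lam : YoungDiagram}

/-- Standardization: every SSYT factors as a seqOK sequence composed with a SYT. -/
lemma exists_std (h : lam.card = n) {F : ↥lam.cells → Fin M} (hF : IsSSYT F) :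
    ∃ (f : ↥lam.cells → Fin n) (g : Fin n → Fin M),
      IsSYT f ∧ seqOK n M (desSYT f) g ∧ g ∘ f = F := by
  have hcard : Fintype.card ↥lam.cells = n := by rw [Fintype.card_coe]; exact h
  obtain ⟨f, hbij, hiff⟩ := rank_bij hcard (sKey n F) (ssyt_key_inj h hF)
  have hkey : ∀ c d : ↥lam.cells, f c < f d ↔
      (F c < F d ∨ (F c = F d ∧ (c : ℕ × ℕ).2 < (d : ℕ × ℕ).2)) := by
    intro c d; rw [hiff, sKey_lt_iff h]
  have hf : IsSYT f := by
    refine ⟨hbij, ?_, ?_⟩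
    · intro c d h1 h2
      rw [hkey]
      rcases eq_or_lt_of_le (hF.1 c d h1 h2.le) with he | hlt
      · exact Or.inr ⟨he, h2⟩
      · exact Or.inl hlt
    · intro c d h1 h2
      exact (hkey c d).mpr (Or.inl (hF.2 c d h1 h2))
  set E : ↥lam.cells ≃ Fin n := Equiv.ofBijective f hbij with hE
  have hEf : ∀ c, E c = f c := fun _ => rfl
  have hEs : ∀ c, E.symm (f c) = c := fun c => E.symm_apply_apply c
  set g : Fin n → Fin M := fun i => F (E.symm i) with hg
  have hcomp : g ∘ f = F := by
    funext c
    simp only [g, Function.comp, ← hEf, E.symm_apply_apply]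
  have hgF : ∀ c : ↥lam.cells, g (f c) = F c := fun c => congrFun hcomp c
  refine ⟨f, g, hf, ?_, hcomp⟩
  intro i j hij
  set c := E.symm i with hc
  set d := E.symm j with hd
  have hfc : f c = i := E.apply_symm_apply i
  have hfd : f d = j := E.apply_symm_apply j
  have hlt : f c < f d := by rw [hfc, hfd, Fin.lt_iff_val_lt_val]; omega
  have hFle : F c ≤ F d := by
    rcases (hkey c d).mp hlt with h1 | h1
    · exact h1.le
    · exact h1.1.le
  constructor
  · rw [show g i = F c by rw [hg], show g j = F d by rw [hg]]
    exact hFle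
  · intro hjdes
    rw [show g i = F c by rw [hg], show g j = F d by rw [hg]]
    simp only [desSYT, Finset.mem_filter, Finset.mem_range] at hjdes
    obtain ⟨-, c', d', hc'1, hd'1, hrow⟩ := hjdes
    have hcc : c' = c := by
      apply hbij.1
      rw [hfc]
      exact Fin.ext (by omega)
    have hdd : d' = d := by
      apply hbij.1
      rw [hfd]
      exact Fin.ext (by omega)
    subst hcc hdd
    rcases eq_or_lt_of_le hFle with he | hlt'
    · exact absurd (ssyt_same_val hF he hrow) (by
        have := (hkey c d).mp hlt
        rcases this with h1 | h1
        · exact absurd he (ne_of_lt h1)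
        · omega)
    · exact hlt'

/-- A strictly monotone self-bijection of `Fin n` is the identity. -/
lemma fin_bij_mono_eq {f f' : ↥lam.cells → Fin n} (hb : Function.Bijective f)
    (hb' : Function.Bijective f')
    (hiff : ∀ c d, f c < f d ↔ f' c < f' d) : f = f' := by
  set E : ↥lam.cells ≃ Fin n := Equiv.ofBijective f hb with hE
  set e : Fin n → Fin n := fun i => f' (E.symm i) with he
  have hmono : StrictMono e := by
    intro i j hij
    apply (hiff (E.symm i) (E.symm j)).mp
    show E (E.symm i) < E (E.symm j)
    rw [E.apply_symm_apply, E.apply_symm_apply]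
    exact hij
  have hsurj : Function.Surjective e := hb'.2.comp E.symm.surjective
  have hid : ∀ i, e i = i := fun i =>
    Fin.ext (Fin.coe_orderIso_apply (hmono.orderIsoOfSurjective e hsurj) i)
  funext c
  have := hid (E c)
  simp only [e] at this
  rw [E.symm_apply_apply] at this
  exact this.symm

end SchurAux4
/-- The Schur polynomial is the sum of fundamental quasisymmetric
functions over standard Young tableaux: `s_λ(X) = Σ_{T ∈ SYT(λ)} F_{Des(T)}(X)`. -/
theorem schur_eq_sum_Fqsym (M n : ℕ) (lam : YoungDiagram) (h : lam.card = n) :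
    schurPoly M lam =
      ∑ f ∈ Finset.univ.filter (fun f : ↥lam.cells → Fin n => IsSYT f),
        Fqsym M n (desSYT f) := by
  classical
  rw [schurPoly]
  simp only [Fqsym]
  rw [Finset.sum_sigma']
  symm
  apply Finset.sum_bij (fun (x : (_ : ↥lam.cells → Fin n) × (Fin n → Fin M)) _ => x.2 ∘ x.1)
  · intro x hx
    rw [Finset.mem_sigma] at hx
    simp only [Finset.mem_filter, Finset.mem_univ, true_and] at hx ⊢
    exact comp_ssyt hx.1 hx.2
  · intro x hx y hy hxy
    rw [Finset.mem_sigma] at hx hy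
    simp only [Finset.mem_filter, Finset.mem_univ, true_and] at hx hy
    obtain ⟨f, g⟩ := x
    obtain ⟨f', g'⟩ := y
    simp only at hxy hx hy
    have hff : f = f' := by
      apply fin_bij_mono_eq hx.1.1 hy.1.1
      intro c d
      rw [std_order_key h hx.1 hx.2, std_order_key h hy.1 hy.2, hxy]
    subst hff
    have hgg : g = g' := by
      funext i
      obtain ⟨c, hc⟩ := hx.1.1.2 i
      have := congrFun hxy c
      simp only [Function.comp] at this
      rw [← hc]
      exact this
    subst hgg
    rfl
  · intro F hF
    simp only [Finset.mem_filter, Finset.mem_univ, true_and] at hF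
    obtain ⟨f, g, hf, hg, hcomp⟩ := exists_std h hF
    refine ⟨⟨f, g⟩, ?_, hcomp⟩
    rw [Finset.mem_sigma]
    simp only [Finset.mem_filter, Finset.mem_univ, true_and]
    exact ⟨hf, hg⟩
  · intro x hx
    rw [Finset.mem_sigma] at hx
    simp only [Finset.mem_filter, Finset.mem_univ, true_and] at hx
    exact (Fintype.prod_bijective x.1 hx.1.1 _ _ (fun c => rfl)).symm
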